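/- Let H be a complex Hilbert space, let u : [0,∞) → H be differentiable and satisfy u'(t) = A(t)(u(t)) + F(t, u(t)) for all t ≥ 0, where for each t, A(t) is a bounded linear operator on H and F(t,·) : H → H. Assume there are constants c₀ > 0 and p > 1 with ‖F(t,x)‖ ≤ c₀‖x‖^p for all t ≥ 0 and x ∈ H. Let c₁ > 0, 0 < q ≤ 1, and set γ(t) = c₁/(1+t)^q; assume Re⟪A(t)x, x⟫ ≤ -γ(t)‖x‖² for all t ≥ 0 and x ∈ H. Let ε ∈ (0, c₁) satisfy (p-1)(c₁-ε) ≥ q, set λ = (c₀/ε)^{1/(p-1)}, and assume ‖u(0)‖ ≤ 1/λ. Then for all t ≥ 0 one has 0 ≤ ‖u(t)‖ ≤ 1/(λ·(1+t)^{c₁-ε}). -/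

import Mathlib

/-!
With `f = ‖u‖²` the hypotheses give `f' ≤ 2c₀ f^((p+1)/2) - 2γ f`. The function
`ψ² = (λ⁻¹ (1+t)^(-(c₁-ε)))²` is a supersolution of this scalar equation: the choice of `λ` turns the
nonlinear term into `ε (1+t)^(-(p-1)(c₁-ε)) ψ² ≤ ε (1+t)^(-q) ψ²`, so the right-hand side at `ψ²` is at
most `-2(c₁-ε)(1+t)^(-q) ψ²`, and `q ≤ 1` makes this below `(ψ²)' = -2(c₁-ε) ψ² / (1+t)`.
Since the right-hand side is locally Lipschitz in `f`, the comparison principle gives `f ≤ ψ²`; it is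
proved by fencing `f - ψ²` with `δ e^(L t)` for `L` above the Lipschitz constant and letting `δ → 0`.
-/

open Set Filter Topology Real
open scoped InnerProductSpace

theorem nonpos_of_hasDerivAt_le_mul_self {h h' : ℝ → ℝ} {a b K ρ : ℝ} (hρ : 0 < ρ)
    (hh : ∀ x ∈ Icc a b, HasDerivAt h (h' x) x)
    (bound : ∀ x ∈ Ico a b, 0 < h x → h x ≤ ρ → h' x ≤ K * h x) (ha : h a ≤ 0) :
    ∀ x ∈ Icc a b, h x ≤ 0 := by
  intro x hx
  set L := |K| + 1
  have hKL : K < L := by linarith [le_abs_self K]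
  have hL : 0 ≤ L := by positivity
  have fence : ∀ δ, 0 < δ → δ * exp (L * (b - a)) < ρ → h x ≤ δ * exp (L * (x - a)) := by
    intro δ hδ hδρ
    have hexp (y : ℝ) :
        HasDerivAt (fun y => δ * exp (L * (y - a))) (L * (δ * exp (L * (y - a)))) y := by
      refine (((((hasDerivAt_id y).sub_const a).const_mul L).exp).const_mul δ).congr_deriv ?_
      simp only [id]
      ring
    refine image_le_of_deriv_right_lt_deriv_boundary'
      (fun y hy => (hh y hy).continuousAt.continuousWithinAt)
      (fun y hy => (hh y (Ico_subset_Icc_self hy)).hasDerivWithinAt) (by simpa using ha.trans hδ.le)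
      (fun y _ => (hexp y).continuousAt.continuousWithinAt) (fun y _ => (hexp y).hasDerivWithinAt)
      ?_ hx
    intro y hy hyδ
    have hpos : 0 < δ * exp (L * (y - a)) := by positivity
    have hleρ : δ * exp (L * (y - a)) ≤ ρ := by
      refine le_trans ?_ hδρ.le
      gcongr
      exact hy.2.le
    calc h' y ≤ K * h y := bound y hy (hyδ ▸ hpos) (hyδ ▸ hleρ)
      _ < L * (δ * exp (L * (y - a))) := by rw [hyδ]; exact mul_lt_mul_of_pos_right hKL hpos
  have hlim (C : ℝ) : Tendsto (fun δ => δ * C) (𝓝[>] 0) (𝓝 0) := by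
    simpa using ((continuous_mul_const C).tendsto 0).mono_left nhdsWithin_le_nhds
  refine ge_of_tendsto (hlim (exp (L * (x - a)))) ?_
  filter_upwards [self_mem_nhdsWithin, (hlim (exp (L * (b - a)))).eventually (gt_mem_nhds hρ)]
    with δ hδ hδρ
  exact fence δ hδ hδρ

theorem le_of_hasDerivAt_of_supersolution {f f' g g' : ℝ → ℝ} {G : ℝ → ℝ → ℝ} {a b K ρ : ℝ}
    (hρ : 0 < ρ) (hf : ∀ x ∈ Icc a b, HasDerivAt f (f' x) x)
    (hg : ∀ x ∈ Icc a b, HasDerivAt g (g' x) x)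
    (hf' : ∀ x ∈ Ico a b, f' x ≤ G x (f x)) (hg' : ∀ x ∈ Ico a b, G x (g x) ≤ g' x)
    (hG : ∀ x ∈ Ico a b, ∀ y, g x < y → y ≤ g x + ρ → G x y - G x (g x) ≤ K * (y - g x))
    (ha : f a ≤ g a) : ∀ x ∈ Icc a b, f x ≤ g x := by
  have hnonpos := nonpos_of_hasDerivAt_le_mul_self (h := f - g) (K := K) hρ
    (fun x hx => (hf x hx).sub (hg x hx)) ?_ (by simpa using ha)
  · exact fun x hx => sub_nonpos.1 (hnonpos x hx)
  · intro x hx hpos hle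
    simp only [Pi.sub_apply] at hpos hle ⊢
    have hlip := hG x hx (f x) (by linarith) (by linarith)
    linarith [hf' x hx, hg' x hx]

theorem rpow_sub_rpow_le_mul_sub {s x y R : ℝ} (hs : 1 ≤ s) (hx : 0 ≤ x) (hxy : x ≤ y)
    (hyR : y ≤ R) : y ^ s - x ^ s ≤ s * R ^ (s - 1) * (y - x) := by
  rcases hxy.eq_or_lt with rfl | hlt
  · simp
  have hslope := (convexOn_rpow hs).slope_le_of_hasDerivAt hx (hx.trans hxy) hlt
    (hasDerivAt_rpow_const (Or.inr hs))
  rw [slope_def_field, div_le_iff₀ (sub_pos.2 hlt)] at hslope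
  calc y ^ s - x ^ s ≤ s * y ^ (s - 1) * (y - x) := hslope
    _ ≤ s * R ^ (s - 1) * (y - x) := by
      gcongr
      linarith

theorem HasDerivAt.norm_sq_re_inner {𝕜 E : Type*} [RCLike 𝕜] [NormedAddCommGroup E]
    [InnerProductSpace 𝕜 E] [NormedSpace ℝ E] {u : ℝ → E} {u' : E} {t : ℝ}
    (hu : HasDerivAt u u' t) :
    HasDerivAt (fun t => ‖u t‖ ^ 2) (2 * RCLike.re ⟪u', u t⟫_𝕜) t := by
  have := (RCLike.reCLM : StrongDual ℝ 𝕜).hasFDerivAt.comp_hasDerivAt t (hu.inner 𝕜 hu)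
  simp only [Function.comp_def, RCLike.reCLM_apply, inner_self_eq_norm_sq, map_add] at this
  refine this.congr_deriv ?_
  rw [inner_re_symm (u t)]
  ring

theorem two_mul_re_inner_add_le {𝕜 E : Type*} [RCLike 𝕜] [NormedAddCommGroup E]
    [InnerProductSpace 𝕜 E] {x y z : E} {γ c₀ p : ℝ} (hp : p + 1 ≠ 0)
    (hy : RCLike.re ⟪y, x⟫_𝕜 ≤ -γ * ‖x‖ ^ 2) (hz : ‖z‖ ≤ c₀ * ‖x‖ ^ p) :
    2 * RCLike.re ⟪y + z, x⟫_𝕜 ≤ 2 * c₀ * (‖x‖ ^ 2) ^ ((p + 1) / 2) - 2 * γ * ‖x‖ ^ 2 := by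
  have hpow : (‖x‖ ^ 2) ^ ((p + 1) / 2) = ‖x‖ ^ p * ‖x‖ := by
    rw [← rpow_natCast, ← rpow_mul (norm_nonneg x), Nat.cast_ofNat,
      mul_div_cancel₀ _ two_ne_zero, rpow_add_one' (norm_nonneg x) hp]
  have hz' : RCLike.re ⟪z, x⟫_𝕜 ≤ c₀ * ‖x‖ ^ p * ‖x‖ :=
    (re_inner_le_norm z x).trans (mul_le_mul_of_nonneg_right hz (norm_nonneg x))
  rw [inner_add_left, map_add, hpow]
  linarith

theorem hasDerivAt_sq_mul_rpow_neg {m c t : ℝ} (ht : 0 < t) :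
    HasDerivAt (fun t => (m * t ^ (-c)) ^ 2) (-2 * c * (m * t ^ (-c)) ^ 2 / t) t := by
  refine (((hasDerivAt_id t).rpow_const (p := -c) (Or.inl ht.ne')).const_mul m).pow 2
    |>.congr_deriv ?_
  simp only [id, rpow_sub_one ht.ne']
  field_simp
  ring

theorem sq_mul_rpow_neg_supersolution {c₀ c₁ ε p q m y : ℝ} (hy : 1 ≤ y) (hm : 0 < m)
    (hε : 0 ≤ ε) (hεc₁ : ε ≤ c₁) (hq1 : q ≤ 1) (hpq : q ≤ (p - 1) * (c₁ - ε))
    (hmε : c₀ * m ^ (p - 1) = ε) :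
    2 * c₀ * ((m * y ^ (-(c₁ - ε))) ^ 2) ^ ((p + 1) / 2)
        - 2 * (c₁ / y ^ q) * (m * y ^ (-(c₁ - ε))) ^ 2
      ≤ -2 * (c₁ - ε) * (m * y ^ (-(c₁ - ε))) ^ 2 / y := by
  set c := c₁ - ε
  set ψ := m * y ^ (-c)
  have hy0 : 0 < y := by linarith
  have hψ : 0 < ψ := by positivity
  have hnonlin : c₀ * (ψ ^ 2) ^ ((p + 1) / 2) = ε * y ^ (-((p - 1) * c)) * ψ ^ 2 := by
    rw [← rpow_natCast, ← rpow_mul hψ.le, Nat.cast_ofNat,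
      show (2 : ℝ) * ((p + 1) / 2) = (p - 1) + 2 by ring, rpow_add hψ, rpow_two,
      mul_rpow hm.le (rpow_nonneg hy0.le _), ← rpow_mul hy0.le, ← hmε]
    ring_nf
  have hslow : y ^ (-((p - 1) * c)) ≤ y ^ (-q) := rpow_le_rpow_of_exponent_le hy (by linarith)
  have hlin : y⁻¹ ≤ y ^ (-q) := by
    rw [← rpow_neg_one]; exact rpow_le_rpow_of_exponent_le hy (by linarith)
  have hγ : c₁ / y ^ q = c₁ * y ^ (-q) := by rw [rpow_neg hy0.le, div_eq_mul_inv]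
  have hc : 0 ≤ c := by linarith
  rw [mul_assoc 2 c₀, hnonlin, hγ, div_eq_mul_inv]
  have hε_term := mul_le_mul_of_nonneg_left hslow (by positivity : 0 ≤ ε * ψ ^ 2)
  have hc_term := mul_le_mul_of_nonneg_left hlin (by positivity : 0 ≤ c * ψ ^ 2)
  linear_combination 2 * hε_term + 2 * hc_term

theorem le_sq_mul_rpow_neg_of_hasDerivAt_le {f f' : ℝ → ℝ} {c₀ c₁ ε p q m : ℝ}
    (hf : ∀ t, 0 ≤ t → HasDerivAt f (f' t) t)
    (hf' : ∀ t, 0 ≤ t → f' t ≤ 2 * c₀ * f t ^ ((p + 1) / 2) - 2 * (c₁ / (1 + t) ^ q) * f t)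
    (hp : 1 ≤ p) (hm : 0 < m) (hε : 0 ≤ ε) (hεc₁ : ε ≤ c₁) (hq1 : q ≤ 1)
    (hpq : q ≤ (p - 1) * (c₁ - ε)) (hmε : c₀ * m ^ (p - 1) = ε) (hf0 : f 0 ≤ m ^ 2) :
    ∀ t, 0 ≤ t → f t ≤ (m * (1 + t) ^ (-(c₁ - ε))) ^ 2 := by
  intro t ht
  set s := (p + 1) / 2
  have hc₀ : 0 ≤ c₀ := by nlinarith [rpow_pos_of_pos hm (p - 1)]
  have hψ_le (x : ℝ) (hx : 0 ≤ x) : (m * (1 + x) ^ (-(c₁ - ε))) ^ 2 ≤ m ^ 2 := by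
    have hle_one : (1 + x) ^ (-(c₁ - ε)) ≤ 1 :=
      rpow_le_one_of_one_le_of_nonpos (by linarith) (by linarith)
    have hnonneg : 0 ≤ (1 + x) ^ (-(c₁ - ε)) := by positivity
    gcongr
    nlinarith
  -- Within distance `1` above the supersolution, `y ≤ m ^ 2 + 1`, where `K` bounds the slope of
  -- `y ↦ 2 c₀ y ^ s`.
  refine le_of_hasDerivAt_of_supersolution (ρ := 1) (K := 2 * c₀ * s * (m ^ 2 + 1) ^ (s - 1))
    (G := fun x y => 2 * c₀ * y ^ s - 2 * (c₁ / (1 + x) ^ q) * y) one_pos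
    (fun x hx => hf x hx.1)
    (fun x hx => (hasDerivAt_sq_mul_rpow_neg (by linarith [hx.1])).comp_const_add 1 x)
    (fun x hx => hf' x hx.1)
    (fun x hx => sq_mul_rpow_neg_supersolution (by linarith [hx.1]) hm hε hεc₁ hq1 hpq hmε)
    ?_ (by simpa using hf0) t ⟨ht, le_rfl⟩
  intro x hx y hlt hle
  have hγ : 0 ≤ c₁ / (1 + x) ^ q := by
    have hx1 : 0 < 1 + x := by linarith [hx.1]
    have hc₁ : 0 ≤ c₁ := by linarith
    positivity
  have hs : 1 ≤ s := by simp only [s]; linarith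
  have hrpow := rpow_sub_rpow_le_mul_sub (R := m ^ 2 + 1) hs (by positivity) hlt.le
    (hle.trans (by linarith [hψ_le x hx.1]))
  have hnonlin := mul_le_mul_of_nonneg_left hrpow (by positivity : 0 ≤ 2 * c₀)
  have hlinear := mul_le_mul_of_nonneg_left hlt.le (by positivity : 0 ≤ 2 * (c₁ / (1 + x) ^ q))
  linarith

theorem asymptotic_decay_vanishing_gamma_general
    {H : Type*} [NormedAddCommGroup H] [InnerProductSpace ℂ H]
    (A : ℝ → H →L[ℂ] H) (F : ℝ → H → H) (u : ℝ → H)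
    (hu : ∀ t : ℝ, 0 ≤ t → HasDerivAt u (A t (u t) + F t (u t)) t)
    (c₀ p : ℝ) (hc₀ : 0 < c₀) (hp : 1 < p)
    (hF : ∀ t : ℝ, 0 ≤ t → ∀ x : H, ‖F t x‖ ≤ c₀ * ‖x‖ ^ p)
    (c₁ q : ℝ) (hq1 : q ≤ 1)
    (γ : ℝ → ℝ) (hγ : ∀ t : ℝ, γ t = c₁ / (1 + t) ^ q)
    (hA : ∀ t : ℝ, 0 ≤ t → ∀ x : H, (inner ℂ (A t x) x : ℂ).re ≤ -γ t * ‖x‖ ^ 2)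
    (ε : ℝ) (hε : ε ∈ Set.Ioo 0 c₁)
    (hpq : (p - 1) * (c₁ - ε) ≥ q)
    (lam : ℝ) (hlam : lam = (c₀ / ε) ^ (1 / (p - 1)))
    (hu0 : ‖u 0‖ ≤ 1 / lam) :
    ∀ t : ℝ, 0 ≤ t → 0 ≤ ‖u t‖ ∧ ‖u t‖ ≤ 1 / (lam * (1 + t) ^ (c₁ - ε)) := by
  obtain ⟨hε0, hεc₁⟩ := hε
  have hc₀ε : 0 < c₀ / ε := div_pos hc₀ hε0
  have hlam0 : 0 < lam := hlam ▸ rpow_pos_of_pos hc₀ε _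
  have hmε : c₀ * lam⁻¹ ^ (p - 1) = ε := by
    rw [hlam, ← rpow_neg hc₀ε.le, ← rpow_mul hc₀ε.le,
      show -(1 / (p - 1)) * (p - 1) = -1 by field_simp [(sub_pos.2 hp).ne'], rpow_neg_one, inv_div]
    field_simp
  have hbound := le_sq_mul_rpow_neg_of_hasDerivAt_le (f := fun t => ‖u t‖ ^ 2)
    (fun t ht => (hu t ht).norm_sq_re_inner (𝕜 := ℂ))
    (fun t ht => hγ t ▸ two_mul_re_inner_add_le (by linarith) (hA t ht (u t)) (hF t ht (u t)))
    hp.le (inv_pos.2 hlam0) hε0.le hεc₁.le hq1 hpq hmε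
    (by simpa [one_div] using pow_le_pow_left₀ (norm_nonneg _) hu0 2)
  intro t ht
  refine ⟨norm_nonneg _, ?_⟩
  have hψ : lam⁻¹ * (1 + t) ^ (-(c₁ - ε)) = 1 / (lam * (1 + t) ^ (c₁ - ε)) := by
    rw [rpow_neg (by linarith), one_div, mul_inv]
  rw [← hψ]
  exact (pow_le_pow_iff_left₀ (norm_nonneg _) (by positivity) two_ne_zero).1 (hbound t ht)

/-- **Theorem 1.4** (Ramm). Decay for `u' = A(t)u + F(t,u)` when the dissipativity
rate `γ(t) = c₁/(1+t)^q`, `0 < q ≤ 1`, tends to zero: if `ε ∈ (0,c₁)`,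
`(p-1)(c₁-ε) ≥ q`, `λ = (c₀/ε)^{1/(p-1)}` and `‖u 0‖ ≤ 1/λ`, then
`0 ≤ ‖u t‖ ≤ 1/(λ(1+t)^{c₁-ε})` for all `t ≥ 0`. -/
theorem asymptotic_decay_vanishing_gamma
    {H : Type*} [NormedAddCommGroup H] [InnerProductSpace ℂ H] [CompleteSpace H]
    (A : ℝ → H →L[ℂ] H) (F : ℝ → H → H) (u : ℝ → H)
    (hu : ∀ t : ℝ, 0 ≤ t → HasDerivAt u (A t (u t) + F t (u t)) t)
    (c₀ p : ℝ) (hc₀ : 0 < c₀) (hp : 1 < p)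
    (hF : ∀ t : ℝ, 0 ≤ t → ∀ x : H, ‖F t x‖ ≤ c₀ * ‖x‖ ^ p)
    (c₁ q : ℝ) (hc₁ : 0 < c₁) (hq : 0 < q) (hq1 : q ≤ 1)
    (γ : ℝ → ℝ) (hγ : ∀ t : ℝ, γ t = c₁ / (1 + t) ^ q)
    (hA : ∀ t : ℝ, 0 ≤ t → ∀ x : H, (inner ℂ (A t x) x : ℂ).re ≤ -γ t * ‖x‖ ^ 2)
    (ε : ℝ) (hε : ε ∈ Set.Ioo 0 c₁)
    (hpq : (p - 1) * (c₁ - ε) ≥ q)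
    (lam : ℝ) (hlam : lam = (c₀ / ε) ^ (1 / (p - 1)))
    (hu0 : ‖u 0‖ ≤ 1 / lam) :
    ∀ t : ℝ, 0 ≤ t → 0 ≤ ‖u t‖ ∧ ‖u t‖ ≤ 1 / (lam * (1 + t) ^ (c₁ - ε)) :=
  asymptotic_decay_vanishing_gamma_general A F u hu c₀ p hc₀ hp hF c₁ q hq1 γ hγ hA ε hε hpq lam
    hlam hu0
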